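/- For every r > 0 and every x ∈ ℝ, the symmetric partial sums ∑_{k=−N}^{N} tanh( π(x + 2πk)/(2r) ) converge as N → ∞, and H_I(r,x) = −x/r + (π/r)·lim_{N→∞} ∑_{k=−N}^{N} tanh( π(x + 2πk)/(2r) ). -/

import Mathlib

open Real Filter

/-- The annulus function `J(r,x) = (π²/(2r²)) ∑_{k ∈ ℤ} cosh(π(x+2kπ)/(2r))⁻²`. -/
noncomputable def Jfun (r x : ℝ) : ℝ :=
  (π ^ 2 / (2 * r ^ 2)) * ∑' k : ℤ, ((Real.cosh (π * (x + 2 * (k : ℝ) * π) / (2 * r))) ^ 2)⁻¹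

/-- `H_I(r,x) = ∫_0^x (J(r,y) - 1/r) dy`. -/
noncomputable def HI (r x : ℝ) : ℝ := ∫ y in (0:ℝ)..x, (Jfun r y - 1 / r)

/-!
With `a = π/(2r)` and `p = 2π`, `J(r,·)` is `(π²/(2r²)) ∑ₖ sech²(a(y + kp))`. Since
`cosh(s + t) ≤ 2 cosh s cosh t`, the `k`-th term is bounded on `[-M, M]` by
`2 cosh(aM) sech(kap)`, which is summable; so the series may be integrated termwise, and the
antiderivative `tanh(a(y + kp))/a` of the `k`-th term gives
`∑ₖ (tanh(a(x + kp)) - tanh(akp)) = a ∫₀ˣ ∑ₖ sech²(a(y + kp)) dy`.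
The subtracted terms are odd in `k`, so they cancel in the symmetric partial sums.
-/

open MeasureTheory Set Topology
open scoped Interval

namespace Real

theorem hasDerivAt_tanh (t : ℝ) : HasDerivAt tanh (cosh t ^ 2)⁻¹ t := by
  have h := (hasDerivAt_sinh t).div (hasDerivAt_cosh t) (cosh_pos t).ne'
  rw [show sinh / cosh = tanh from funext fun s => (tanh_eq_sinh_div_cosh s).symm] at h
  exact h.congr_deriv (by rw [← sq, ← sq, cosh_sq_sub_sinh_sq, one_div])

theorem abs_sinh_le_cosh (t : ℝ) : |sinh t| ≤ cosh t :=
  abs_le.mpr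
    ⟨neg_le.mpr (by simpa using (sinh_lt_cosh (x := -t)).le), (sinh_lt_cosh (x := t)).le⟩

theorem cosh_add_le_two_mul_cosh_mul_cosh (s t : ℝ) : cosh (s + t) ≤ 2 * cosh s * cosh t := by
  have h : sinh s * sinh t ≤ cosh s * cosh t := by
    calc sinh s * sinh t ≤ |sinh s| * |sinh t| := abs_mul (sinh s) (sinh t) ▸ le_abs_self _
      _ ≤ cosh s * cosh t :=
        mul_le_mul (abs_sinh_le_cosh s) (abs_sinh_le_cosh t) (abs_nonneg _) (cosh_pos s).le
  rw [cosh_add]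
  linarith

theorem inv_cosh_add_le (s t : ℝ) : (cosh (s + t))⁻¹ ≤ 2 * cosh s * (cosh t)⁻¹ := by
  have h := cosh_add_le_two_mul_cosh_mul_cosh (s + t) (-s)
  rw [add_neg_cancel_comm, cosh_neg] at h
  rw [← div_eq_mul_inv, ← inv_div]
  exact inv_anti₀ (by positivity)
    (div_le_of_le_mul₀ (by positivity) (by positivity) (by linarith))

theorem inv_cosh_le_two_mul_exp_neg_abs (t : ℝ) : (cosh t)⁻¹ ≤ 2 * exp (-|t|) := by
  rw [exp_neg, ← div_eq_mul_inv, ← inv_div, ← cosh_abs]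
  refine inv_anti₀ (by positivity) ?_
  rw [cosh_eq]
  linarith [exp_pos (-|t|)]

theorem summable_inv_cosh_int_mul {c : ℝ} (hc : c ≠ 0) :
    Summable fun k : ℤ => (cosh (k * c))⁻¹ := by
  have hnat : Summable fun n : ℕ => (cosh (n * c))⁻¹ := by
    refine Summable.of_nonneg_of_le (fun n => by positivity) (fun n => ?_)
      ((summable_exp_nat_mul_iff.mpr (neg_neg_of_pos (abs_pos.mpr hc))).mul_left 2)
    simpa [abs_mul] using inv_cosh_le_two_mul_exp_neg_abs (n * c)
  exact .of_nat_of_neg (by simpa using hnat) (by simpa using hnat)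

end Real

theorem uIcc_zero_subset_Icc_abs (x : ℝ) : uIcc 0 x ⊆ Icc (-|x|) |x| :=
  uIcc_subset_Icc (by simp) (by simp [le_abs_self, neg_abs_le])

theorem Function.Odd.sum_Icc_neg_self_eq_zero {β : Type*} [AddCommGroup β] [IsAddTorsionFree β]
    {f : ℤ → β} (hf : f.Odd) (N : ℤ) : ∑ k ∈ Finset.Icc (-N) N, f k = 0 :=
  hf.finsetSum_eq_zero (by ext; simp; omega)

theorem continuous_inv_cosh_sq_mul_add (a s : ℝ) :
    Continuous fun y => (cosh (a * (y + s)) ^ 2)⁻¹ :=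
  ((continuous_cosh.comp (by fun_prop)).pow 2).inv₀ fun _ => pow_ne_zero 2 (cosh_pos _).ne'

theorem inv_cosh_sq_le_of_abs_le (a p : ℝ) (k : ℤ) {y M : ℝ} (hy : |y| ≤ M) :
    (cosh (a * (y + k * p)) ^ 2)⁻¹ ≤ 2 * cosh (a * M) * (cosh (k * (a * p)))⁻¹ := by
  have hM : 0 ≤ M := (abs_nonneg y).trans hy
  have hcosh : cosh (a * y) ≤ cosh (a * M) := by
    rw [cosh_le_cosh, abs_mul, abs_mul, abs_of_nonneg hM]
    exact mul_le_mul_of_nonneg_left hy (abs_nonneg a)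
  calc (cosh (a * (y + k * p)) ^ 2)⁻¹ ≤ (cosh (a * y + k * (a * p)))⁻¹ := by
        rw [← inv_pow, show a * (y + k * p) = a * y + k * (a * p) by ring]
        exact pow_le_of_le_one (by positivity) (inv_le_one_of_one_le₀ (one_le_cosh _)) two_ne_zero
    _ ≤ 2 * cosh (a * y) * (cosh (k * (a * p)))⁻¹ := inv_cosh_add_le _ _
    _ ≤ 2 * cosh (a * M) * (cosh (k * (a * p)))⁻¹ := by gcongr

section Lattice

variable {a p : ℝ}

theorem continuousOn_tsum_inv_cosh_sq (hap : a * p ≠ 0) (M : ℝ) :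
    ContinuousOn (fun y => ∑' k : ℤ, (cosh (a * (y + k * p)) ^ 2)⁻¹) (Icc (-M) M) :=
  continuousOn_tsum (fun k => (continuous_inv_cosh_sq_mul_add a _).continuousOn)
    ((summable_inv_cosh_int_mul hap).mul_left _) fun k y hy => by
      rw [norm_of_nonneg (by positivity)]
      exact inv_cosh_sq_le_of_abs_le a p k (abs_le.mpr hy)

theorem hasSum_intervalIntegral_inv_cosh_sq (hap : a * p ≠ 0) (x : ℝ) :
    HasSum (fun k : ℤ => ∫ y in 0..x, (cosh (a * (y + k * p)) ^ 2)⁻¹)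
      (∫ y in 0..x, ∑' k : ℤ, (cosh (a * (y + k * p)) ^ 2)⁻¹) := by
  have hbound (k : ℤ) (y : ℝ) (hy : y ∈ Ι 0 x) :
      (cosh (a * (y + k * p)) ^ 2)⁻¹ ≤ 2 * cosh (a * |x|) * (cosh (k * (a * p)))⁻¹ :=
    inv_cosh_sq_le_of_abs_le a p k
      (abs_le.mpr (uIcc_zero_subset_Icc_abs x (uIoc_subset_uIcc hy)))
  have hsummable := (summable_inv_cosh_int_mul hap).mul_left (2 * cosh (a * |x|))
  refine intervalIntegral.hasSum_integral_of_dominated_convergence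
    (fun k _ => 2 * cosh (a * |x|) * (cosh (k * (a * p)))⁻¹)
    (fun k => (continuous_inv_cosh_sq_mul_add a _).aestronglyMeasurable)
    (fun k => ae_of_all _ fun y hy => ?_)
    (ae_of_all _ fun _ _ => hsummable) intervalIntegrable_const
    (ae_of_all _ fun y hy => (hsummable.of_nonneg_of_le (fun k => by positivity)
      fun k => hbound k y hy).hasSum)
  rw [norm_of_nonneg (by positivity)]
  exact hbound k y hy

theorem integral_inv_cosh_sq_mul_add (ha : a ≠ 0) (s x : ℝ) :
    ∫ y in 0..x, (cosh (a * (y + s)) ^ 2)⁻¹ = (tanh (a * (x + s)) - tanh (a * s)) / a := by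
  have hderiv (y : ℝ) :
      HasDerivAt (fun z => tanh (a * (z + s)) / a) (cosh (a * (y + s)) ^ 2)⁻¹ y := by
    have hlin : HasDerivAt (fun z => a * (z + s)) a y := by
      simpa using ((hasDerivAt_id y).add_const s).const_mul a
    exact (((hasDerivAt_tanh _).comp y hlin).div_const a).congr_deriv (by field_simp)
  rw [intervalIntegral.integral_eq_sub_of_hasDerivAt (fun y _ => hderiv y)
    ((continuous_inv_cosh_sq_mul_add a s).intervalIntegrable _ _), zero_add, sub_div]

theorem hasSum_tanh_sub_tanh (hap : a * p ≠ 0) (x : ℝ) :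
    HasSum (fun k : ℤ => tanh (a * (x + k * p)) - tanh (a * (k * p)))
      (a * ∫ y in 0..x, ∑' k : ℤ, (cosh (a * (y + k * p)) ^ 2)⁻¹) := by
  have ha : a ≠ 0 := left_ne_zero_of_mul hap
  have hterm (k : ℤ) : a * ∫ y in 0..x, (cosh (a * (y + k * p)) ^ 2)⁻¹ =
      tanh (a * (x + k * p)) - tanh (a * (k * p)) := by
    rw [integral_inv_cosh_sq_mul_add ha]
    field_simp
  simpa only [hterm] using (hasSum_intervalIntegral_inv_cosh_sq hap x).mul_left a

theorem tendsto_sum_Icc_tanh (hap : a * p ≠ 0) (x : ℝ) :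
    Tendsto (fun N : ℕ => ∑ k ∈ Finset.Icc (-(N : ℤ)) N, tanh (a * (x + k * p))) atTop
      (𝓝 (a * ∫ y in 0..x, ∑' k : ℤ, (cosh (a * (y + k * p)) ^ 2)⁻¹)) := by
  refine (SummationFilter.hasSum_symmetricIcc_iff.mp
    ((hasSum_tanh_sub_tanh hap x).mono_left (SummationFilter.symmetricIcc ℤ).le_atTop)).congr
    fun N => ?_
  rw [Finset.sum_sub_distrib, sub_eq_self]
  refine Function.Odd.sum_Icc_neg_self_eq_zero (fun k => ?_) N
  rw [Int.cast_neg, neg_mul, mul_neg, tanh_neg]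

end Lattice

theorem Jfun_eq (r y : ℝ) :
    Jfun r y =
      π ^ 2 / (2 * r ^ 2) * ∑' k : ℤ, (cosh (π / (2 * r) * (y + k * (2 * π))) ^ 2)⁻¹ := by
  unfold Jfun
  congr! 6 with k
  ring

/-- For every `r > 0` and `x ∈ ℝ`, the symmetric partial sums
`∑_{k=-N}^N tanh(π(x+2πk)/(2r))` converge to some `L`, and
`H_I(r,x) = -x/r + (π/r) L`. -/
theorem stmt17 (r : ℝ) (hr : 0 < r) (x : ℝ) :
    ∃ L : ℝ,
      Tendsto (fun N : ℕ =>
          ∑ k ∈ Finset.Icc (-(N : ℤ)) (N : ℤ),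
            Real.tanh (π * (x + 2 * π * (k : ℝ)) / (2 * r)))
        atTop (nhds L) ∧
      HI r x = -x / r + (π / r) * L := by
  have hap : π / (2 * r) * (2 * π) ≠ 0 := by positivity
  refine ⟨_, (tendsto_sum_Icc_tanh hap x).congr fun N => Finset.sum_congr rfl fun k _ => ?_, ?_⟩
  · ring_nf
  · have hJ : IntervalIntegrable (Jfun r) volume 0 x := by
      rw [funext (Jfun_eq r)]
      exact (((continuousOn_tsum_inv_cosh_sq hap |x|).mono
        (uIcc_zero_subset_Icc_abs x)).intervalIntegrable).const_mul _
    rw [HI, intervalIntegral.integral_sub hJ intervalIntegrable_const, funext (Jfun_eq r),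
      intervalIntegral.integral_const_mul, intervalIntegral.integral_const, smul_eq_mul]
    field_simp
    ring
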